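/- arXiv:1903.01459 — 2 statements merged into one kernel-verified Lean document; each statement's English description precedes it below -/
import Mathlib

section
/- Uniform boundedness of the local-linear scaling constant (fact (a) in the proof of Proposition S.4): Let K : ℝ → ℝ be nonnegative, bounded and Lipschitz continuous, with K(−u) = K(u) for all u, K(u) = 0 for |u| > 1, and ∫_ℝ K(u) du = 1. For x ∈ [0,1] and h ∈ (0, 1/2], define κ_ℓ(x,h) = ∫_{−x/h}^{(1−x)/h} u^ℓ K(u) du for ℓ = 0,1,2, ρ(x,h) = ∫_{−x/h}^{(1−x)/h} K(u)² (κ₂(x,h) − κ₁(x,h)·u)² du, and s(x,h) = ρ(x,h) / (κ₀(x,h)·κ₂(x,h) − κ₁(x,h)²)². Then there exist constants 0 < c_s ≤ C_s < ∞, depending only on K, such that for all x ∈ [0,1] and all h ∈ (0, 1/2], κ₀(x,h)·κ₂(x,h) − κ₁(x,h)² > 0 and c_s ≤ s(x,h) ≤ C_s. -/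
open MeasureTheory

/-- The truncated kernel moments `κ_ℓ(x,h) = ∫_{−x/h}^{(1−x)/h} u^ℓ K(u) du`. -/
noncomputable def kmom (K : ℝ → ℝ) (ℓ : ℕ) (x h : ℝ) : ℝ :=
  ∫ u in (-(x / h))..((1 - x) / h), u ^ ℓ * K u

/-- `ρ(x,h) = ∫_{−x/h}^{(1−x)/h} K(u)² (κ₂(x,h) − κ₁(x,h)·u)² du`. -/
noncomputable def krho (K : ℝ → ℝ) (x h : ℝ) : ℝ :=
  ∫ u in (-(x / h))..((1 - x) / h),
    K u ^ 2 * (kmom K 2 x h - kmom K 1 x h * u) ^ 2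

/-- The local-linear scaling constant
`s(x,h) = ρ(x,h) / (κ₀(x,h)·κ₂(x,h) − κ₁(x,h)²)²`. -/
noncomputable def kscale (K : ℝ → ℝ) (x h : ℝ) : ℝ :=
  krho K x h / (kmom K 0 x h * kmom K 2 x h - kmom K 1 x h ^ 2) ^ 2

open intervalIntegral Set

/-!
Being continuous, nonnegative and of integral one, `K` is bounded below by some `m > 0` on an
interval of length `r` inside `[0, 1]`, and by symmetry on its mirror image in `[-1, 0]`. For
`x ∈ [0, 1]` and `h ≤ 1/2` the window `[-x/h, (1-x)/h]` contains `0` and has length `1/h ≥ 2`,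
so it contains one of the two plateaus. There the integrands of `κ₀`, of
`κ₀κ₂ - κ₁² = κ₀ ∫ K (κ₁/κ₀ - u)²` and of `ρ` dominate explicit quadratics, whose integrals over
an interval of length `r` are bounded below in terms of `m` and `r` alone. The support condition
gives `|κ_ℓ| ≤ κ₀ ≤ 1`, whence the upper bounds.
-/

theorem integral_sub_mul_sq (α β p q : ℝ) :
    ∫ u in p..q, (α - β * u) ^ 2
      = (q - p) * ((α - β * ((p + q) / 2)) ^ 2 + β ^ 2 * (q - p) ^ 2 / 12) := by
  have hderiv : ∀ u ∈ uIcc p q, HasDerivAt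
      (fun u => α ^ 2 * u - α * β * u ^ 2 + β ^ 2 * u ^ 3 / 3) ((α - β * u) ^ 2) u := by
    intro u _
    have := (((hasDerivAt_id' u).const_mul (α ^ 2)).sub
      ((hasDerivAt_pow 2 u).const_mul (α * β))).add
      ((hasDerivAt_pow 3 u).const_mul (β ^ 2) |>.div_const 3)
    norm_num at this
    exact this.congr_deriv (by ring)
  rw [integral_eq_sub_of_hasDerivAt hderiv (Continuous.intervalIntegrable (by fun_prop) _ _)]
  ring

theorem cube_div_twelve_le_integral_sub_sq (t : ℝ) {p q : ℝ} (hpq : p ≤ q) :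
    (q - p) ^ 3 / 12 ≤ ∫ u in p..q, (t - u) ^ 2 := by
  have h := integral_sub_mul_sq t 1 p q
  simp only [one_mul, one_pow] at h
  rw [h]
  nlinarith [mul_nonneg (sub_nonneg.2 hpq) (sq_nonneg (t - (p + q) / 2))]

/-- Minimising `(α - β c)² + β² s` over `β`, with `c` the midpoint and `s = (q - p)² / 12`, gives
`α² s / (s + c²)`. -/
theorem sq_mul_cube_div_le_integral_sub_mul_sq (α β : ℝ) {p q : ℝ} (hpq : p ≤ q)
    (hmid : |p + q| ≤ 2) :
    α ^ 2 * (q - p) ^ 3 / ((q - p) ^ 2 + 12) ≤ ∫ u in p..q, (α - β * u) ^ 2 := by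
  rw [integral_sub_mul_sq, div_le_iff₀ (by positivity)]
  set c := (p + q) / 2
  set s := (q - p) ^ 2 / 12
  have hL : 0 ≤ q - p := sub_nonneg.2 hpq
  have hc : c ^ 2 ≤ 1 := by
    rw [sq_le_one_iff_abs_le_one, abs_div, abs_two, div_le_one two_pos]
    exact hmid
  have hmin : α ^ 2 * s ≤ (s + c ^ 2) * ((α - β * c) ^ 2 + β ^ 2 * s) := by
    nlinarith [sq_nonneg ((s + c ^ 2) * β - c * α)]
  have hs : 0 ≤ (1 - c ^ 2) * ((α - β * c) ^ 2 + β ^ 2 * s) :=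
    mul_nonneg (sub_nonneg.2 hc) (by positivity)
  have hq : (q - p) ^ 2 = 12 * s := by ring
  rw [show β ^ 2 * (q - p) ^ 2 / 12 = β ^ 2 * s by ring,
    show (q - p) ^ 3 = (q - p) ^ 2 * (q - p) by ring, hq]
  nlinarith [mul_nonneg hL (add_nonneg hs (sub_nonneg.2 hmin))]

theorem integral_le_integral_of_le_on_subinterval {f g : ℝ → ℝ} {a b c d : ℝ}
    (hf : Continuous f) (hg : Continuous g) (hf0 : ∀ u, 0 ≤ f u)
    (hac : a ≤ c) (hcd : c ≤ d) (hdb : d ≤ b) (hgf : ∀ u ∈ Icc c d, g u ≤ f u) :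
    ∫ u in c..d, g u ≤ ∫ u in a..b, f u :=
  (integral_mono_on hcd (hg.intervalIntegrable _ _) (hf.intervalIntegrable _ _) hgf).trans
    (integral_mono_interval hac hcd hdb (.of_forall hf0) (hf.intervalIntegrable _ _))

theorem le_div_sq_and_div_sq_le {ρ ρ₁ ρ₂ D d : ℝ} (hρ₁ : 0 ≤ ρ₁) (h₁ : ρ₁ ≤ ρ) (h₂ : ρ ≤ ρ₂)
    (hd : 0 < d) (hdD : d ≤ D) (hD : D ≤ 1) :
    ρ₁ ≤ ρ / D ^ 2 ∧ ρ / D ^ 2 ≤ ρ₂ / d ^ 2 := by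
  have hD0 : 0 < D := hd.trans_le hdD
  constructor
  · rw [le_div_iff₀ (by positivity)]
    nlinarith [pow_le_one₀ (n := 2) hD0.le hD, pow_pos hD0 2]
  · exact div_le_div₀ (hρ₁.trans (h₁.trans h₂)) h₂ (by positivity) (by gcongr)

theorem unit_window_bounds {x h : ℝ} (hx : x ∈ Icc (0 : ℝ) 1) (hh : 0 < h) (hh2 : h ≤ 1 / 2) :
    -(x / h) ≤ 0 ∧ 0 ≤ (1 - x) / h ∧ 2 ≤ (1 - x) / h - -(x / h) := by
  refine ⟨neg_nonpos.2 (div_nonneg hx.1 hh.le), div_nonneg (sub_nonneg.2 hx.2) hh.le, ?_⟩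
  rw [sub_neg_eq_add, ← add_div, sub_add_cancel, le_div_iff₀ hh]
  linarith

/-- `kmom K ℓ x h` is `windowMoment K ℓ (-(x / h)) ((1 - x) / h)`. -/
noncomputable def windowMoment (K : ℝ → ℝ) (ℓ : ℕ) (a b : ℝ) : ℝ :=
  ∫ u in a..b, u ^ ℓ * K u

section Kernel

variable {K : ℝ → ℝ} {a b : ℝ}

theorem windowMoment_zero : windowMoment K 0 a b = ∫ u in a..b, K u := by
  simp [windowMoment]

theorem hasCompactSupport_of_abs_gt_one (hsupp : ∀ u : ℝ, 1 < |u| → K u = 0) :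
    HasCompactSupport K :=
  HasCompactSupport.intro (isCompact_Icc (a := -1) (b := 1)) fun u hu =>
    hsupp u (lt_of_not_ge fun h => hu (abs_le.1 h))

theorem abs_pow_mul_le (hK0 : ∀ u, 0 ≤ K u) (hsupp : ∀ u : ℝ, 1 < |u| → K u = 0)
    (ℓ : ℕ) (u : ℝ) : |u ^ ℓ * K u| ≤ K u := by
  rcases le_or_gt |u| 1 with hu | hu
  · rw [abs_mul, abs_of_nonneg (hK0 u), abs_pow]
    exact mul_le_of_le_one_left (hK0 u) (pow_le_one₀ (abs_nonneg u) hu)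
  · simp [hsupp u hu]

theorem abs_windowMoment_le (hK : Continuous K) (hK0 : ∀ u, 0 ≤ K u)
    (hsupp : ∀ u : ℝ, 1 < |u| → K u = 0) (ℓ : ℕ) (hab : a ≤ b) :
    |windowMoment K ℓ a b| ≤ windowMoment K 0 a b := by
  rw [windowMoment_zero]
  exact (abs_integral_le_integral_abs hab).trans <| integral_mono_on hab
    (Continuous.intervalIntegrable (by fun_prop) _ _) (hK.intervalIntegrable _ _)
    fun u _ => abs_pow_mul_le hK0 hsupp ℓ u

theorem windowMoment_zero_le_one (hK : Continuous K) (hK0 : ∀ u, 0 ≤ K u)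
    (hsupp : ∀ u : ℝ, 1 < |u| → K u = 0) (hint : ∫ u, K u = 1) (hab : a ≤ b) :
    windowMoment K 0 a b ≤ 1 := by
  rw [windowMoment_zero, integral_of_le hab, ← hint]
  exact setIntegral_le_integral
    (hK.integrable_of_hasCompactSupport (hasCompactSupport_of_abs_gt_one hsupp)) (.of_forall hK0)

theorem windowMoment_two_nonneg (hK0 : ∀ u, 0 ≤ K u) (hab : a ≤ b) :
    0 ≤ windowMoment K 2 a b :=
  integral_nonneg hab fun u _ => mul_nonneg (sq_nonneg u) (hK0 u)

theorem integral_mul_sub_sq (hK : Continuous K) (t : ℝ) :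
    ∫ u in a..b, K u * (t - u) ^ 2
      = t ^ 2 * windowMoment K 0 a b - 2 * t * windowMoment K 1 a b + windowMoment K 2 a b := by
  have hmom (ℓ : ℕ) : IntervalIntegrable (fun u => u ^ ℓ * K u) volume a b :=
    Continuous.intervalIntegrable (by fun_prop) _ _
  calc ∫ u in a..b, K u * (t - u) ^ 2
      = ∫ u in a..b, (t ^ 2 * (u ^ 0 * K u) - 2 * t * (u ^ 1 * K u) + u ^ 2 * K u) := by
        congr 1
        ext u
        ring
    _ = _ := by
        rw [integral_add (((hmom 0).const_mul _).sub ((hmom 1).const_mul _)) (hmom 2),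
          integral_sub ((hmom 0).const_mul _) ((hmom 1).const_mul _),
          intervalIntegral.integral_const_mul, intervalIntegral.integral_const_mul]
        rfl

theorem windowDet_eq (hK : Continuous K) (h0 : windowMoment K 0 a b ≠ 0) :
    windowMoment K 0 a b * windowMoment K 2 a b - windowMoment K 1 a b ^ 2
      = windowMoment K 0 a b *
          ∫ u in a..b, K u * (windowMoment K 1 a b / windowMoment K 0 a b - u) ^ 2 := by
  rw [integral_mul_sub_sq hK]
  field_simp
  ring

theorem windowDet_le_windowMoment_two (hK : Continuous K) (hK0 : ∀ u, 0 ≤ K u)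
    (hsupp : ∀ u : ℝ, 1 < |u| → K u = 0) (hint : ∫ u, K u = 1) (hab : a ≤ b) :
    windowMoment K 0 a b * windowMoment K 2 a b - windowMoment K 1 a b ^ 2
      ≤ windowMoment K 2 a b := by
  nlinarith [windowMoment_zero_le_one hK hK0 hsupp hint hab, windowMoment_two_nonneg hK0 hab,
    sq_nonneg (windowMoment K 1 a b)]

theorem integral_sq_mul_sub_mul_sq_le (hK : Continuous K) (hK0 : ∀ u, 0 ≤ K u)
    (hsupp : ∀ u : ℝ, 1 < |u| → K u = 0) (hint : ∫ u, K u = 1) {B : ℝ} (hB : ∀ u, K u ≤ B)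
    (hab : a ≤ b) {α β : ℝ} (hα : |α| ≤ 1) (hβ : |β| ≤ 1) :
    ∫ u in a..b, K u ^ 2 * (α - β * u) ^ 2 ≤ 4 * B := by
  have hB0 : 0 ≤ B := (hK0 0).trans (hB 0)
  have hpt (u : ℝ) : K u ^ 2 * (α - β * u) ^ 2 ≤ 4 * B * K u := by
    rcases le_or_gt |u| 1 with hu | hu
    · have hβu : |β * u| ≤ 1 := by
        rw [abs_mul]
        exact mul_le_one₀ hβ (abs_nonneg u) hu
      have h4 : (α - β * u) ^ 2 ≤ 2 ^ 2 := by
        obtain ⟨hα₁, hα₂⟩ := abs_le.1 hα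
        obtain ⟨hβ₁, hβ₂⟩ := abs_le.1 hβu
        exact sq_le_sq' (by linarith) (by linarith)
      nlinarith [hK0 u, hB u, mul_nonneg (sq_nonneg (K u)) (sub_nonneg.2 h4),
        mul_nonneg (hK0 u) (sub_nonneg.2 (hB u))]
    · simp [hsupp u hu]
  calc ∫ u in a..b, K u ^ 2 * (α - β * u) ^ 2
      ≤ ∫ u in a..b, 4 * B * K u :=
        integral_mono_on hab (Continuous.intervalIntegrable (by fun_prop) _ _)
          (Continuous.intervalIntegrable (by fun_prop) _ _) fun u _ => hpt u
    _ = 4 * B * windowMoment K 0 a b := by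
        rw [intervalIntegral.integral_const_mul, windowMoment_zero]
    _ ≤ 4 * B := mul_le_of_le_one_right (by positivity)
        (windowMoment_zero_le_one hK hK0 hsupp hint hab)

section Plateau

variable {m c r : ℝ}

theorem mul_le_windowMoment_zero (hK : Continuous K) (hK0 : ∀ u, 0 ≤ K u) (hac : a ≤ c)
    (hcb : c + r ≤ b) (hr : 0 ≤ r) (hplat : ∀ u ∈ Icc c (c + r), m ≤ K u) :
    m * r ≤ windowMoment K 0 a b := by
  have h := integral_le_integral_of_le_on_subinterval hK continuous_const hK0 hac
    (by linarith) hcb hplat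
  rw [intervalIntegral.integral_const, add_sub_cancel_left, smul_eq_mul] at h
  rw [windowMoment_zero, mul_comm]
  exact h

theorem le_integral_mul_sub_sq (hK : Continuous K) (hK0 : ∀ u, 0 ≤ K u) (hac : a ≤ c)
    (hcb : c + r ≤ b) (hr : 0 ≤ r) (hplat : ∀ u ∈ Icc c (c + r), m ≤ K u) (hm : 0 ≤ m)
    (t : ℝ) :
    m * (r ^ 3 / 12) ≤ ∫ u in a..b, K u * (t - u) ^ 2 := by
  have hcube := cube_div_twelve_le_integral_sub_sq t (le_add_of_nonneg_right (a := c) hr)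
  rw [add_sub_cancel_left] at hcube
  calc m * (r ^ 3 / 12) ≤ m * ∫ u in c..c + r, (t - u) ^ 2 := by gcongr
    _ = ∫ u in c..c + r, m * (t - u) ^ 2 := (intervalIntegral.integral_const_mul _ _).symm
    _ ≤ _ := integral_le_integral_of_le_on_subinterval (by fun_prop) (by fun_prop)
        (fun u => mul_nonneg (hK0 u) (sq_nonneg _)) hac (by linarith) hcb
        fun u hu => mul_le_mul_of_nonneg_right (hplat u hu) (sq_nonneg _)

theorem le_windowDet (hK : Continuous K) (hK0 : ∀ u, 0 ≤ K u) (hac : a ≤ c)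
    (hcb : c + r ≤ b) (hr : 0 < r) (hplat : ∀ u ∈ Icc c (c + r), m ≤ K u) (hm : 0 < m) :
    m ^ 2 * r ^ 4 / 12
      ≤ windowMoment K 0 a b * windowMoment K 2 a b - windowMoment K 1 a b ^ 2 := by
  have h0 := mul_le_windowMoment_zero hK hK0 hac hcb hr.le hplat
  have hκ₀ : 0 < windowMoment K 0 a b := (mul_pos hm hr).trans_le h0
  rw [windowDet_eq hK hκ₀.ne']
  calc m ^ 2 * r ^ 4 / 12 = (m * r) * (m * (r ^ 3 / 12)) := by ring
    _ ≤ _ := mul_le_mul h0 (le_integral_mul_sub_sq hK hK0 hac hcb hr.le hplat hm.le _)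
        (by positivity) hκ₀.le

theorem le_integral_sq_mul_sub_mul_sq (hK : Continuous K) (hac : a ≤ c)
    (hcb : c + r ≤ b) (hc : -1 ≤ c) (hcr : c + r ≤ 1) (hr : 0 ≤ r)
    (hplat : ∀ u ∈ Icc c (c + r), m ≤ K u) (hm : 0 ≤ m) (α β : ℝ) :
    m ^ 2 * (α ^ 2 * r ^ 3 / (r ^ 2 + 12)) ≤ ∫ u in a..b, K u ^ 2 * (α - β * u) ^ 2 := by
  have hquad := sq_mul_cube_div_le_integral_sub_mul_sq α β (le_add_of_nonneg_right (a := c) hr)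
    (abs_le.2 ⟨by linarith, by linarith⟩)
  rw [add_sub_cancel_left] at hquad
  calc m ^ 2 * (α ^ 2 * r ^ 3 / (r ^ 2 + 12))
      ≤ m ^ 2 * ∫ u in c..c + r, (α - β * u) ^ 2 := by gcongr
    _ = ∫ u in c..c + r, m ^ 2 * (α - β * u) ^ 2 := (intervalIntegral.integral_const_mul _ _).symm
    _ ≤ _ := integral_le_integral_of_le_on_subinterval (by fun_prop) (by fun_prop)
        (fun u => by positivity) hac (by linarith) hcb
        fun u hu => mul_le_mul_of_nonneg_right (pow_le_pow_left₀ hm (hplat u hu) 2)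
          (sq_nonneg _)

theorem scale_bounds_of_plateau (hK : Continuous K) (hK0 : ∀ u, 0 ≤ K u)
    (hsupp : ∀ u : ℝ, 1 < |u| → K u = 0) (hint : ∫ u, K u = 1) {B : ℝ} (hB : ∀ u, K u ≤ B)
    (hac : a ≤ c) (hcb : c + r ≤ b) (hc : -1 ≤ c) (hcr : c + r ≤ 1) (hr : 0 < r)
    (hplat : ∀ u ∈ Icc c (c + r), m ≤ K u) (hm : 0 < m) :
    let D := windowMoment K 0 a b * windowMoment K 2 a b - windowMoment K 1 a b ^ 2
    let ρ := ∫ u in a..b, K u ^ 2 * (windowMoment K 2 a b - windowMoment K 1 a b * u) ^ 2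
    let d := m ^ 2 * r ^ 4 / 12
    0 < D ∧ m ^ 2 * (d ^ 2 * r ^ 3 / (r ^ 2 + 12)) ≤ ρ / D ^ 2 ∧ ρ / D ^ 2 ≤ 4 * B / d ^ 2 := by
  intro D ρ d
  have hab : a ≤ b := by linarith
  have hdD : d ≤ D := le_windowDet hK hK0 hac hcb hr hplat hm
  have hDκ₂ : D ≤ windowMoment K 2 a b := windowDet_le_windowMoment_two hK hK0 hsupp hint hab
  have hκ (ℓ : ℕ) : |windowMoment K ℓ a b| ≤ 1 :=
    (abs_windowMoment_le hK hK0 hsupp ℓ hab).trans (windowMoment_zero_le_one hK hK0 hsupp hint hab)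
  have hρ₁ : m ^ 2 * (d ^ 2 * r ^ 3 / (r ^ 2 + 12)) ≤ ρ := by
    refine le_trans ?_ (le_integral_sq_mul_sub_mul_sq hK hac hcb hc hcr hr.le hplat hm.le _ _)
    gcongr
    exact hdD.trans hDκ₂
  have hρ₂ : ρ ≤ 4 * B := integral_sq_mul_sub_mul_sq_le hK hK0 hsupp hint hB hab (hκ 2) (hκ 1)
  have hd : 0 < d := by positivity
  exact ⟨hd.trans_le hdD, le_div_sq_and_div_sq_le (by positivity) hρ₁ hρ₂ hd hdD
    (hDκ₂.trans (le_of_abs_le (hκ 2)))⟩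

theorem exists_plateau_in_window (hsymm : ∀ u, K (-u) = K u) (hc : 0 ≤ c) (hcr : c + r ≤ 1)
    (hplat : ∀ u ∈ Icc c (c + r), m ≤ K u) (ha : a ≤ 0) (hb : 0 ≤ b) (hab : 2 ≤ b - a) :
    ∃ c', a ≤ c' ∧ c' + r ≤ b ∧ -1 ≤ c' ∧ c' + r ≤ 1 ∧ ∀ u ∈ Icc c' (c' + r), m ≤ K u := by
  rcases le_or_gt 1 b with hb1 | hb1
  · exact ⟨c, by linarith, by linarith, by linarith, hcr, hplat⟩
  · refine ⟨-(c + r), by linarith, by linarith, by linarith, by linarith, fun u hu => ?_⟩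
    rw [← hsymm u]
    exact hplat (-u) ⟨by linarith [hu.2], by linarith [hu.1]⟩

end Plateau

theorem exists_plateau_in_unit_interval (hK : Continuous K) (hK0 : ∀ u, 0 ≤ K u)
    (hsymm : ∀ u, K (-u) = K u) (hsupp : ∀ u : ℝ, 1 < |u| → K u = 0) (hint : ∫ u, K u = 1) :
    ∃ m r c, 0 < m ∧ 0 < r ∧ 0 ≤ c ∧ c + r ≤ 1 ∧ ∀ u ∈ Icc c (c + r), m ≤ K u := by
  obtain ⟨v, hv⟩ : ∃ v, 0 < K |v| := by
    by_contra! h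
    have hzero : K = 0 := funext fun u => le_antisymm
      (by rcases abs_choice u with hu | hu <;> simpa [hu, hsymm] using h u) (hK0 u)
    simp [hzero] at hint
  have hv1 : |v| ≤ 1 := not_lt.1 fun h => hv.ne' (hsupp _ (by rwa [abs_abs]))
  obtain ⟨ε, hε, hball⟩ := Metric.eventually_nhds_iff.1
    (hK.continuousAt.eventually (lt_mem_nhds (half_lt_self hv)))
  set δ := min (ε / 2) 1
  have hδε : δ < ε := (min_le_left _ _).trans_lt (half_lt_self hε)
  have hδ1 : δ ≤ 1 := min_le_right _ _
  have hδ : 0 < δ := lt_min (half_pos hε) one_pos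
  have hlow : |v| - δ ≤ min |v| (1 - δ) := le_min (by linarith) (by linarith)
  refine ⟨K |v| / 2, δ, min |v| (1 - δ), half_pos hv, hδ,
    le_min (abs_nonneg v) (by linarith), by linarith [min_le_right |v| (1 - δ)],
    fun u hu => (hball ?_).le⟩
  rw [Real.dist_eq, abs_lt]
  constructor <;> linarith [hu.1, hu.2, min_le_left |v| (1 - δ)]

end Kernel

/-- **Uniform boundedness of the local-linear scaling constant (fact (a) in the proof of
Proposition S.4).** For a nonnegative, bounded, Lipschitz, symmetric kernel `K` with
support in `[−1,1]` and `∫ K = 1`, there exist constants `0 < c_s ≤ C_s < ∞`, depending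
only on `K`, such that for all `x ∈ [0,1]` and all bandwidths `0 < h ≤ 1/2` the
denominator `κ₀κ₂ − κ₁²` is positive and `c_s ≤ s(x,h) ≤ C_s`. -/
theorem scaling_constant_uniformly_bounded (K : ℝ → ℝ)
    (hnonneg : ∀ u, 0 ≤ K u)
    (hbdd : ∃ B : ℝ, ∀ u, K u ≤ B)
    (hlip : ∃ L : NNReal, LipschitzWith L K)
    (hsymm : ∀ u, K (-u) = K u)
    (hsupp : ∀ u : ℝ, 1 < |u| → K u = 0)
    (hint : (∫ u, K u) = 1) :
    ∃ cs Cs : ℝ, 0 < cs ∧ cs ≤ Cs ∧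
      ∀ x ∈ Set.Icc (0 : ℝ) 1, ∀ h : ℝ, 0 < h → h ≤ 1 / 2 →
        0 < kmom K 0 x h * kmom K 2 x h - kmom K 1 x h ^ 2 ∧
          cs ≤ kscale K x h ∧ kscale K x h ≤ Cs := by
  obtain ⟨B, hB⟩ := hbdd
  obtain ⟨L, hL⟩ := hlip
  have hK : Continuous K := hL.continuous
  obtain ⟨m, r, c, hm, hr, hc, hcr, hplat⟩ :=
    exists_plateau_in_unit_interval hK hnonneg hsymm hsupp hint
  set d := m ^ 2 * r ^ 4 / 12
  have key : ∀ x ∈ Set.Icc (0 : ℝ) 1, ∀ h : ℝ, 0 < h → h ≤ 1 / 2 →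
      0 < kmom K 0 x h * kmom K 2 x h - kmom K 1 x h ^ 2 ∧
        m ^ 2 * (d ^ 2 * r ^ 3 / (r ^ 2 + 12)) ≤ kscale K x h ∧ kscale K x h ≤ 4 * B / d ^ 2 := by
    intro x hx h hh hh2
    obtain ⟨ha, hb, hab⟩ := unit_window_bounds hx hh hh2
    obtain ⟨c', hac, hcb, hc', hcr', hplat'⟩ :=
      exists_plateau_in_window hsymm hc hcr hplat ha hb hab
    exact scale_bounds_of_plateau hK hnonneg hsupp hint hB hac hcb hc' hcr' hr hplat' hm
  obtain ⟨-, hlow, hupp⟩ := key 0 ⟨le_rfl, zero_le_one⟩ (1 / 2) (by norm_num) le_rfl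
  exact ⟨_, _, by positivity, hlow.trans hupp, key⟩
end

section
/- Consistency of the thresholded dendrogram estimator with a possibly growing number of groups (probabilistic master version covering Theorem 2 and its Section 8.3 extension): For each T ∈ ℕ, let K₀(T) ≥ 1 and n(T) ≥ K₀(T) be integers, let {G₁^{(T)},…,G_{K₀(T)}^{(T)}} be a partition of {1,…,n(T)} into K₀(T) nonempty groups, let d̂^{(T)} be a random symmetric real array on {1,…,n(T)}² with probability measure P_T, and let π_T be a deterministic real sequence. If P_T( max_{1≤k≤K₀(T)} max_{i,j∈G_k^{(T)}, i≠j} d̂^{(T)}_{ij} ≤ π_T and min_{1≤k<k′≤K₀(T)} min_{i∈G_k^{(T)}, j∈G_{k′}^{(T)}} d̂^{(T)}_{ij} > π_T ) → 1 as T → ∞ (the between-group condition being vacuous when K₀(T) = 1), then P_T( K̂₀(d̂^{(T)}, π_T) = K₀(T) ) → 1 as T → ∞. -/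
open Finset

/-- Complete-linkage dissimilarity `Δ(S,S') = max_{i ∈ S, j ∈ S'} d i j`, as an
extended real (so that the value over an empty index set is `⊥`). -/
noncomputable def cLink {n : ℕ} (d : Fin n → Fin n → ℝ) (S S' : Finset (Fin n)) : EReal :=
  sSup {x : EReal | ∃ i ∈ S, ∃ j ∈ S', x = (d i j : EReal)}

/-- Within-cluster dissimilarity `Δ(C) = max_{i,j ∈ C, i ≠ j} d i j`, as an extended real;
for a singleton (or empty) cluster the value is `⊥`, which is smaller than every real. -/
noncomputable def cDiam {n : ℕ} (d : Fin n → Fin n → ℝ) (C : Finset (Fin n)) : EReal :=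
  sSup {x : EReal | ∃ i ∈ C, ∃ j ∈ C, i ≠ j ∧ x = (d i j : EReal)}

/-- The initial partition of `{1,…,n}` into `n` singleton clusters. -/
def singletonPartition (n : ℕ) : Finset (Finset (Fin n)) :=
  Finset.univ.image fun i : Fin n => ({i} : Finset (Fin n))

/-- `Q` is obtained from `P` by merging one pair of distinct clusters attaining the
minimum of the complete-linkage dissimilarity `Δ` over all pairs of distinct clusters. -/
def IsMergeStep {n : ℕ} (d : Fin n → Fin n → ℝ) (P Q : Finset (Finset (Fin n))) : Prop :=
  ∃ C ∈ P, ∃ C' ∈ P, C ≠ C' ∧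
    (∀ D ∈ P, ∀ D' ∈ P, D ≠ D' → cLink d C C' ≤ cLink d D D') ∧
    Q = insert (C ∪ C') ((P.erase C).erase C')

/-- A run of the complete-linkage HAC algorithm (with an arbitrary choice of
tie-breaking at each step): `P 0` is the singleton partition and for every
`r < n - 1`, `P (r+1)` is obtained from `P r` by a merge step. -/
def IsHACChain {n : ℕ} (d : Fin n → Fin n → ℝ) (P : ℕ → Finset (Finset (Fin n))) : Prop :=
  P 0 = singletonPartition n ∧ ∀ r, r < n - 1 → IsMergeStep d (P r) (P (r + 1))

/-- `G` is a partition of `{1,…,n}` into `K₀` nonempty groups. -/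
def IsGroupPartition {n K₀ : ℕ} (G : Fin K₀ → Finset (Fin n)) : Prop :=
  (∀ k, (G k).Nonempty) ∧ (∀ i : Fin n, ∃ k, i ∈ G k) ∧
    ∀ k k' : Fin K₀, k ≠ k' → Disjoint (G k) (G k')

/-- The partition `G` is `d`-separated: every within-group distance is strictly smaller
than every between-group distance (vacuously true when `K₀ = 1`). -/
def IsSeparated {n K₀ : ℕ} (d : Fin n → Fin n → ℝ) (G : Fin K₀ → Finset (Fin n)) : Prop :=
  ∀ k : Fin K₀, ∀ i ∈ G k, ∀ j ∈ G k, i ≠ j →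
    ∀ k₁ k₂ : Fin K₀, k₁ ≠ k₂ → ∀ a ∈ G k₁, ∀ b ∈ G k₂, d i j < d a b

/-- `A` is a refinement of `B`: every element of `A` is a subset of some element of `B`. -/
def IsRefinement {n : ℕ} (A B : Finset (Finset (Fin n))) : Prop :=
  ∀ C ∈ A, ∃ D ∈ B, C ⊆ D

/-- The thresholded dendrogram estimator of the number of groups:
`K̂₀(d,π) = min { K ∈ {1,…,n} : every cluster of the HAC partition into K clusters has
within-cluster dissimilarity at most π }`. -/
noncomputable def Khat {n : ℕ} (d : Fin n → Fin n → ℝ)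
    (P : ℕ → Finset (Finset (Fin n))) (π : ℝ) : ℕ :=
  sInf {K : ℕ | 1 ≤ K ∧ K ≤ n ∧ ∀ C ∈ P (n - K), cDiam d C ≤ (π : EReal)}

/-!
While the HAC partition has more clusters than there are groups, two of its clusters lie in a
common group and are therefore at linkage at most `π`; the minimising pair is then at linkage at
most `π` as well, so by separation it lies in a single group. Hence the partition with `K₀`
clusters refines the groups and all its diameters are at most `π`. Conversely, a partition with
fewer than `K₀` clusters has a cluster meeting two groups, whose diameter exceeds `π`. So
`K̂₀ = K₀` on the separation event, and its probability tends to one.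
-/

open MeasureTheory Filter

section Linkage

variable {n : ℕ} {d : Fin n → Fin n → ℝ} {π : ℝ}

lemma cLink_le_coe {S S' : Finset (Fin n)} (h : ∀ i ∈ S, ∀ j ∈ S', d i j ≤ π) :
    cLink d S S' ≤ π :=
  sSup_le <| by
    rintro x ⟨i, hi, j, hj, rfl⟩
    exact_mod_cast h i hi j hj

lemma coe_le_cLink {S S' : Finset (Fin n)} {i j : Fin n} (hi : i ∈ S) (hj : j ∈ S') :
    (d i j : EReal) ≤ cLink d S S' :=
  le_sSup ⟨i, hi, j, hj, rfl⟩

lemma cDiam_le_coe {C : Finset (Fin n)} (h : ∀ i ∈ C, ∀ j ∈ C, i ≠ j → d i j ≤ π) :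
    cDiam d C ≤ π :=
  sSup_le <| by
    rintro x ⟨i, hi, j, hj, hij, rfl⟩
    exact_mod_cast h i hi j hj hij

lemma coe_le_cDiam {C : Finset (Fin n)} {i j : Fin n} (hi : i ∈ C) (hj : j ∈ C) (hij : i ≠ j) :
    (d i j : EReal) ≤ cDiam d C :=
  le_sSup ⟨i, hi, j, hj, hij, rfl⟩

end Linkage

structure IsPartition {α : Type*} (P : Finset (Finset α)) : Prop where
  nonempty : ∀ C ∈ P, C.Nonempty
  cover : ∀ i, ∃ C ∈ P, i ∈ C
  disjoint : ∀ C ∈ P, ∀ C' ∈ P, C ≠ C' → Disjoint C C'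

namespace IsPartition

variable {α : Type*} [DecidableEq α] {P : Finset (Finset α)} {C C' : Finset α}

lemma merge (hP : IsPartition P) (hC : C ∈ P) (hC' : C' ∈ P) :
    IsPartition (insert (C ∪ C') ((P.erase C).erase C')) := by
  have hrest : ∀ D ∈ (P.erase C).erase C', D ∈ P ∧ Disjoint (C ∪ C') D := by
    intro D hD
    obtain ⟨hDC', hDC, hD⟩ : D ≠ C' ∧ D ≠ C ∧ D ∈ P := by simpa using hD
    exact ⟨hD, disjoint_union_left.2
      ⟨hP.disjoint C hC D hD (Ne.symm hDC), hP.disjoint C' hC' D hD (Ne.symm hDC')⟩⟩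
  refine ⟨?_, fun i => ?_, ?_⟩
  · simp only [mem_insert, forall_eq_or_imp]
    exact ⟨(hP.nonempty C hC).mono subset_union_left,
      fun D hD => hP.nonempty D (hrest D hD).1⟩
  · obtain ⟨D, hD, hiD⟩ := hP.cover i
    by_cases hDC : D = C
    · exact ⟨_, mem_insert_self _ _, mem_union_left _ (hDC ▸ hiD)⟩
    by_cases hDC' : D = C'
    · exact ⟨_, mem_insert_self _ _, mem_union_right _ (hDC' ▸ hiD)⟩
    exact ⟨D, mem_insert_of_mem (by simp [hD, hDC, hDC']), hiD⟩
  · simp only [mem_insert, forall_eq_or_imp]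
    refine ⟨⟨fun h => absurd rfl h, fun D hD _ => (hrest D hD).2⟩, fun D hD => ⟨?_, ?_⟩⟩
    · exact fun _ => (hrest D hD).2.symm
    · exact fun D' hD' => hP.disjoint D (hrest D hD).1 D' (hrest D' hD').1

lemma card_merge (hP : IsPartition P) (hC : C ∈ P) (hC' : C' ∈ P) (hne : C ≠ C') :
    (insert (C ∪ C') ((P.erase C).erase C')).card + 1 = P.card := by
  have hunion : C ∪ C' ∉ (P.erase C).erase C' := by
    intro h
    obtain ⟨-, hneC, hmem⟩ : C ∪ C' ≠ C' ∧ C ∪ C' ≠ C ∧ C ∪ C' ∈ P := by simpa using h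
    obtain ⟨i, hi⟩ := hP.nonempty C hC
    exact disjoint_left.1 (hP.disjoint C hC _ hmem (Ne.symm hneC)) hi (mem_union_left _ hi)
  have hcard : 1 < P.card := one_lt_card.2 ⟨C, hC, C', hC', hne⟩
  rw [card_insert_of_notMem hunion, card_erase_of_mem (mem_erase.2 ⟨Ne.symm hne, hC'⟩),
    card_erase_of_mem hC]
  omega

end IsPartition

lemma isPartition_singletonPartition (n : ℕ) : IsPartition (singletonPartition n) where
  nonempty := by simp [singletonPartition]
  cover i := ⟨{i}, mem_image_of_mem _ (mem_univ i), mem_singleton_self i⟩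
  disjoint := by simp [singletonPartition, ne_comm]

lemma card_singletonPartition (n : ℕ) : (singletonPartition n).card = n := by
  simp [singletonPartition, card_image_of_injective _ singleton_injective]

lemma IsHACChain.isPartition_card {n : ℕ} {d : Fin n → Fin n → ℝ}
    {Q : ℕ → Finset (Finset (Fin n))} (hQ : IsHACChain d Q) :
    ∀ r ≤ n - 1, IsPartition (Q r) ∧ (Q r).card = n - r := by
  intro r
  induction r with
  | zero => simp [hQ.1, isPartition_singletonPartition, card_singletonPartition]
  | succ r ih =>
    intro hr
    obtain ⟨hP, hcard⟩ := ih (by omega)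
    obtain ⟨C, hC, C', hC', hne, -, hstep⟩ := hQ.2 r (by omega)
    rw [hstep]
    exact ⟨hP.merge hC hC', by have := hP.card_merge hC hC' hne; omega⟩

structure IsThresholdSeparated {n K₀ : ℕ} (d : Fin n → Fin n → ℝ)
    (G : Fin K₀ → Finset (Fin n)) (π : ℝ) : Prop where
  within : ∀ k, ∀ i ∈ G k, ∀ j ∈ G k, i ≠ j → d i j ≤ π
  between : ∀ k k' : Fin K₀, k ≠ k' → ∀ i ∈ G k, ∀ j ∈ G k', π < d i j

section Groups

variable {n K₀ : ℕ} {d : Fin n → Fin n → ℝ} {G : Fin K₀ → Finset (Fin n)} {π : ℝ}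

lemma IsGroupPartition.card_le (hG : IsGroupPartition G) : K₀ ≤ n := by
  simpa using card_le_card_of_forall_subsingleton (s := univ) (t := univ)
    (fun k i => i ∈ G k) (fun k _ => let ⟨i, hi⟩ := hG.1 k; ⟨i, mem_univ i, hi⟩)
    (fun i _ k hk k' hk' => by
      by_contra hne
      exact disjoint_left.1 (hG.2.2 k k' hne) hk.2 hk'.2)

lemma IsGroupPartition.card_le_of_cDiam_le (hG : IsGroupPartition G)
    (hbetween : ∀ k k' : Fin K₀, k ≠ k' → ∀ i ∈ G k, ∀ j ∈ G k', π < d i j)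
    {P : Finset (Finset (Fin n))} (hP : IsPartition P) (hdiam : ∀ C ∈ P, cDiam d C ≤ π) :
    K₀ ≤ P.card := by
  simpa using card_le_card_of_forall_subsingleton (s := univ) (t := P)
    (fun k C => ∃ i ∈ G k, i ∈ C)
    (fun k _ => by
      obtain ⟨i, hi⟩ := hG.1 k
      obtain ⟨C, hC, hiC⟩ := hP.cover i
      exact ⟨C, hC, i, hi, hiC⟩)
    (fun C hC k ⟨_, i, hi, hiC⟩ k' ⟨_, j, hj, hjC⟩ => by
      by_contra hne
      have hij : i ≠ j := fun h => disjoint_left.1 (hG.2.2 k k' hne) hi (h ▸ hj)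
      have : (π : EReal) < π :=
        calc (π : EReal) < d i j := mod_cast hbetween k k' hne i hi j hj
          _ ≤ cDiam d C := coe_le_cDiam hiC hjC hij
          _ ≤ π := hdiam C hC
      exact this.false)

lemma exists_ne_subset_of_card_lt {P : Finset (Finset (Fin n))}
    (hPG : ∀ C ∈ P, ∃ k, C ⊆ G k) (hcard : K₀ < P.card) :
    ∃ k, ∃ C ∈ P, ∃ C' ∈ P, C ≠ C' ∧ C ⊆ G k ∧ C' ⊆ G k := by
  by_contra! h
  refine hcard.not_ge ?_
  simpa using card_le_card_of_forall_subsingleton (s := P) (t := univ)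
    (fun C k => C ⊆ G k) (fun C hC => by simpa using hPG C hC)
    (fun k _ C hC C' hC' => by
      by_contra hne
      exact h k C hC.1 C' hC'.1 hne hC.2 hC'.2)

lemma IsMergeStep.subset_group (hsep : IsThresholdSeparated d G π)
    {P Q : Finset (Finset (Fin n))} (hP : IsPartition P) (hPG : ∀ C ∈ P, ∃ k, C ⊆ G k)
    (hcard : K₀ < P.card) (hPQ : IsMergeStep d P Q) : ∀ C ∈ Q, ∃ k, C ⊆ G k := by
  obtain ⟨C, hC, C', hC', hne, hmin, rfl⟩ := hPQ
  obtain ⟨k, D, hD, D', hD', hDD', hDk, hD'k⟩ := exists_ne_subset_of_card_lt hPG hcard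
  have hlink : cLink d D D' ≤ π := cLink_le_coe fun i hi j hj =>
    hsep.within k i (hDk hi) j (hD'k hj)
      fun h => disjoint_left.1 (hP.disjoint D hD D' hD' hDD') hi (h ▸ hj)
  obtain ⟨l, hl⟩ := hPG C hC
  obtain ⟨l', hl'⟩ := hPG C' hC'
  obtain rfl : l = l' := by
    by_contra hll'
    obtain ⟨i, hi⟩ := hP.nonempty C hC
    obtain ⟨j, hj⟩ := hP.nonempty C' hC'
    have : (π : EReal) < π :=
      calc (π : EReal) < d i j := mod_cast hsep.between l l' hll' i (hl hi) j (hl' hj)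
        _ ≤ cLink d C C' := coe_le_cLink hi hj
        _ ≤ cLink d D D' := hmin D hD D' hD' hDD'
        _ ≤ π := hlink
    exact this.false
  intro E hE
  rcases mem_insert.1 hE with rfl | hE
  · exact ⟨l, union_subset hl hl'⟩
  · exact hPG E (mem_erase.1 (mem_erase.1 hE).2).2

lemma IsHACChain.subset_group {Q : ℕ → Finset (Finset (Fin n))} (hQ : IsHACChain d Q)
    (hG : IsGroupPartition G) (hsep : IsThresholdSeparated d G π) (hK : 0 < K₀) :
    ∀ r ≤ n - K₀, ∀ C ∈ Q r, ∃ k, C ⊆ G k := by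
  intro r
  induction r with
  | zero =>
    intro _ C hC
    obtain ⟨i, -, rfl⟩ := mem_image.1 (hQ.1 ▸ hC)
    obtain ⟨k, hk⟩ := hG.2.1 i
    exact ⟨k, singleton_subset_iff.2 hk⟩
  | succ r ih =>
    intro hr
    obtain ⟨hP, hcard⟩ := hQ.isPartition_card r (by omega)
    exact IsMergeStep.subset_group hsep hP (ih (by omega)) (by omega) (hQ.2 r (by omega))

theorem Khat_eq_of_isThresholdSeparated (hG : IsGroupPartition G)
    (hsep : IsThresholdSeparated d G π) {Q : ℕ → Finset (Finset (Fin n))}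
    (hQ : IsHACChain d Q) : Khat d Q π = K₀ := by
  rcases Nat.eq_zero_or_pos K₀ with rfl | hK
  -- no groups forces `n = 0`, where `Khat` is `sInf ∅ = 0`
  · obtain rfl : n = 0 := by
      by_contra hn
      obtain ⟨k, -⟩ := hG.2.1 ⟨0, Nat.pos_of_ne_zero hn⟩
      exact k.elim0
    exact Nat.sInf_eq_zero.2 (.inr (Set.eq_empty_of_forall_notMem fun K ⟨h1, h0, _⟩ => by omega))
  apply IsLeast.csInf_eq
  refine ⟨⟨hK, hG.card_le, fun C hC => ?_⟩, ?_⟩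
  · obtain ⟨k, hk⟩ := hQ.subset_group hG hsep hK _ le_rfl C hC
    exact cDiam_le_coe fun i hi j hj => hsep.within k i (hk hi) j (hk hj)
  · rintro K ⟨hK1, hKn, hdiam⟩
    obtain ⟨hP, hcard⟩ := hQ.isPartition_card (n - K) (by omega)
    simpa [hcard, Nat.sub_sub_self hKn] using hG.card_le_of_cDiam_le hsep.between hP hdiam

end Groups

theorem khat_consistency_growing_K0_general
    (n K₀ : ℕ → ℕ)
    (Ω : ℕ → Type*) [∀ T, MeasurableSpace (Ω T)]
    (μ : ∀ T, Measure (Ω T)) [∀ T, IsProbabilityMeasure (μ T)]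
    (dh : ∀ T, Ω T → Fin (n T) → Fin (n T) → ℝ)
    (G : ∀ T, Fin (K₀ T) → Finset (Fin (n T)))
    (hG : ∀ T, IsGroupPartition (G T))
    (π : ℕ → ℝ)
    (hsep : Tendsto
      (fun T => μ T {ω |
        (∀ k, ∀ i ∈ G T k, ∀ j ∈ G T k, i ≠ j → dh T ω i j ≤ π T) ∧
          ∀ k k' : Fin (K₀ T), k ≠ k' →
            ∀ i ∈ G T k, ∀ j ∈ G T k', π T < dh T ω i j})
      atTop (nhds (1 : ENNReal))) :
    Tendsto
      (fun T => μ T {ω | ∀ Q, IsHACChain (dh T ω) Q → Khat (dh T ω) Q (π T) = K₀ T})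
      atTop (nhds (1 : ENNReal)) := by
  refine tendsto_of_tendsto_of_tendsto_of_le_of_le hsep tendsto_const_nhds
    (fun T => measure_mono ?_) (fun T => prob_le_one)
  rintro ω ⟨hwithin, hbetween⟩ Q hQ
  exact Khat_eq_of_isThresholdSeparated (hG T) ⟨hwithin, hbetween⟩ hQ

/-- **Consistency of the thresholded dendrogram estimator with a possibly growing number
of groups (master version covering Theorem 2 and its Section 8.3 extension).** If, with
probability tending to one, the threshold `π_T` lies weakly above every within-group
distance and strictly below every between-group distance (the latter being vacuous when
`K₀(T) = 1`), then `P_T(K̂₀(d̂⁽ᵀ⁾, π_T) = K₀(T)) → 1`, for every run (tie-breaking) of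
the complete-linkage HAC algorithm. -/
theorem khat_consistency_growing_K0
    (n K₀ : ℕ → ℕ) (hK₀ : ∀ T, 1 ≤ K₀ T) (hn : ∀ T, K₀ T ≤ n T)
    (Ω : ℕ → Type*) [∀ T, MeasurableSpace (Ω T)]
    (μ : ∀ T, Measure (Ω T)) [∀ T, IsProbabilityMeasure (μ T)]
    (dh : ∀ T, Ω T → Fin (n T) → Fin (n T) → ℝ)
    (hsym : ∀ T ω i j, dh T ω i j = dh T ω j i)
    (G : ∀ T, Fin (K₀ T) → Finset (Fin (n T)))
    (hG : ∀ T, IsGroupPartition (G T))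
    (π : ℕ → ℝ)
    (hsep : Tendsto
      (fun T => μ T {ω |
        (∀ k, ∀ i ∈ G T k, ∀ j ∈ G T k, i ≠ j → dh T ω i j ≤ π T) ∧
          ∀ k k' : Fin (K₀ T), k ≠ k' →
            ∀ i ∈ G T k, ∀ j ∈ G T k', π T < dh T ω i j})
      atTop (nhds (1 : ENNReal))) :
    Tendsto
      (fun T => μ T {ω | ∀ Q, IsHACChain (dh T ω) Q → Khat (dh T ω) Q (π T) = K₀ T})
      atTop (nhds (1 : ENNReal)) :=
  khat_consistency_growing_K0_general n K₀ Ω μ dh G hG π hsep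
end
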